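/- arXiv:math/0602385 — 3 statements merged into one kernel-verified Lean document; each statement's English description precedes it below -/
import Mathlib

section
/- Let (Ω, F, (F_n)_{n∈ℕ}, P) be a filtered probability space and let (ξ_n)_{n∈ℕ} be a real-valued square-integrable process adapted to (F_n). Let h > 0 and K > 0 and suppose that for every n, almost surely |E(ξ_{n+1} − ξ_n | F_n)| ≤ h·K and E((ξ_{n+1} − ξ_n)² | F_n) ≤ h·K². Then for all n, m ∈ ℕ, almost surely E((ξ_{n+m} − ξ_n)² | F_n) ≤ 2K²·(mh)·(mh + 1). -/
open MeasureTheory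

private lemma l2_mul_int {Ω : Type*} {mΩ : MeasurableSpace Ω} {P : Measure Ω}
    {f g : Ω → ℝ} (hf : MemLp f 2 P) (hg : MemLp g 2 P) :
    Integrable (fun ω => f ω * g ω) P := by
  have h1 : MemLp (f • g) 1 P := hg.smul hf
  rw [memLp_one_iff_integrable] at h1
  exact h1


/-- discrete-time second-moment estimate for the Aldous tightness
criterion.  If an adapted square-integrable process `ξ` has one-step conditional mean
bounded by `h·K` and one-step conditional second moment bounded by `h·K²`, then
`E((ξ_{n+m} − ξ_n)² | F_n) ≤ 2K²·(mh)·(mh + 1)` almost surely. -/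
theorem stmt_8 {Ω : Type*} {mΩ : MeasurableSpace Ω} (P : Measure Ω)
    [IsProbabilityMeasure P] (F : Filtration ℕ mΩ)
    (ξ : ℕ → Ω → ℝ) (hadapted : StronglyAdapted F ξ) (hL2 : ∀ n, MemLp (ξ n) 2 P)
    (h K : ℝ) (hh : 0 < h) (hK : 0 < K)
    (hmean : ∀ n, ∀ᵐ ω ∂P, |(P[fun ω => ξ (n + 1) ω - ξ n ω | F n]) ω| ≤ h * K)
    (hsecond : ∀ n, ∀ᵐ ω ∂P,
      (P[fun ω => (ξ (n + 1) ω - ξ n ω) ^ 2 | F n]) ω ≤ h * K ^ 2) :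
    ∀ n m : ℕ, ∀ᵐ ω ∂P,
      (P[fun ω => (ξ (n + m) ω - ξ n ω) ^ 2 | F n]) ω ≤
        2 * K ^ 2 * (m * h) * (m * h + 1) := by
  intro n m
  have hFle : ∀ k, F k ≤ mΩ := fun k => F.le k
  -- one-step increments
  set Δ : ℕ → Ω → ℝ := fun k ω => ξ (k + 1) ω - ξ k ω with hΔdef
  have hΔ2 : ∀ k, MemLp (Δ k) 2 P := fun k => (hL2 (k + 1)).sub (hL2 k)
  have hΔint : ∀ k, Integrable (Δ k) P := fun k => (hΔ2 k).integrable one_le_two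
  set A : ℕ → Ω → ℝ := fun k => P[Δ k | F k] with hAdef
  have hAsm : ∀ k, StronglyMeasurable[F k] (A k) := fun k => stronglyMeasurable_condExp
  have hAbd : ∀ k, ∀ᵐ ω ∂P, |A k ω| ≤ h * K := hmean
  have hA2 : ∀ k, MemLp (A k) 2 P := fun k =>
    MemLp.of_bound ((hAsm k).mono (hFle k)).aestronglyMeasurable (h * K)
      (by filter_upwards [hAbd k] with ω hω; simpa [Real.norm_eq_abs] using hω)
  have hAint : ∀ k, Integrable (A k) P := fun k => (hA2 k).integrable one_le_two
  set D : ℕ → Ω → ℝ := fun k ω => Δ k ω - A k ω with hDdef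
  have hD2 : ∀ k, MemLp (D k) 2 P := fun k => (hΔ2 k).sub (hA2 k)
  have hDint : ∀ k, Integrable (D k) P := fun k => (hD2 k).integrable one_le_two
  -- conditional mean of D vanishes
  have hAfix : ∀ k, P[A k | F k] = A k := fun k =>
    condExp_of_stronglyMeasurable (hFle k) (hAsm k) (hAint k)
  have hDmean : ∀ k, P[D k | F k] =ᵐ[P] 0 := by
    intro k
    have h1 : P[D k | F k] =ᵐ[P] P[Δ k | F k] - P[A k | F k] :=
      condExp_sub (hΔint k) (hAint k) (F k)
    refine h1.trans ?_
    rw [hAfix k]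
    filter_upwards with ω
    simp [hAdef]
  -- conditional second moment of D
  have hDsq : ∀ k, ∀ᵐ ω ∂P, (P[fun ω => (D k ω) ^ 2 | F k]) ω ≤ h * K ^ 2 := by
    intro k
    have hexp : (fun ω => (D k ω) ^ 2) =
        fun ω => (Δ k ω) ^ 2 - (A k ω * Δ k ω + A k ω * D k ω) := by
      funext ω; simp only [hDdef]; ring
    have hintAΔ : Integrable (fun ω => A k ω * Δ k ω) P := l2_mul_int (hA2 k) (hΔ2 k)
    have hintAD : Integrable (fun ω => A k ω * D k ω) P := l2_mul_int (hA2 k) (hD2 k)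
    have hintΔsq : Integrable (fun ω => (Δ k ω) ^ 2) P := (hΔ2 k).integrable_sq
    have e1 : P[fun ω => (D k ω) ^ 2 | F k] =ᵐ[P]
        P[fun ω => (Δ k ω) ^ 2 | F k] - P[fun ω => A k ω * Δ k ω + A k ω * D k ω | F k] := by
      rw [hexp]
      exact condExp_sub hintΔsq (hintAΔ.add hintAD) (F k)
    have e2 : P[fun ω => A k ω * Δ k ω + A k ω * D k ω | F k] =ᵐ[P]
        P[fun ω => A k ω * Δ k ω | F k] + P[fun ω => A k ω * D k ω | F k] :=
      condExp_add hintAΔ hintAD (F k)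
    have e3 : P[fun ω => A k ω * Δ k ω | F k] =ᵐ[P] fun ω => A k ω * (P[Δ k | F k]) ω :=
      condExp_mul_of_stronglyMeasurable_left (hAsm k) hintAΔ (hΔint k)
    have e4 : P[fun ω => A k ω * D k ω | F k] =ᵐ[P] fun ω => A k ω * (P[D k | F k]) ω :=
      condExp_mul_of_stronglyMeasurable_left (hAsm k) hintAD (hDint k)
    filter_upwards [e1, e2, e3, e4, hDmean k, hsecond k] with ω h1 h2 h3 h4 h5 h6
    have hA : (P[Δ k | F k]) ω = A k ω := by rw [hAdef]
    rw [h1, Pi.sub_apply, h2, Pi.add_apply, h3, h4, h5, hA]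
    simp only [Pi.zero_apply, mul_zero, add_zero]
    nlinarith [sq_nonneg (A k ω), h6]
  -- martingale part and drift part
  set M : ℕ → Ω → ℝ := fun j ω => ∑ i ∈ Finset.range j, D (n + i) ω with hMdef
  set B : ℕ → Ω → ℝ := fun j ω => ∑ i ∈ Finset.range j, A (n + i) ω with hBdef
  have hM2 : ∀ j, MemLp (M j) 2 P := fun j =>
    memLp_finset_sum _ fun i _ => hD2 (n + i)
  have hB2 : ∀ j, MemLp (B j) 2 P := fun j =>
    memLp_finset_sum _ fun i _ => hA2 (n + i)
  have hMsm : ∀ j, StronglyMeasurable[F (n + j)] (M j) := by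
    intro j
    apply Finset.stronglyMeasurable_fun_sum _ fun i hi => ?_
    have hij : n + i + 1 ≤ n + j := by
      have := Finset.mem_range.mp hi; omega
    have hsm : StronglyMeasurable[F (n + i + 1)] (D (n + i)) := by
      apply StronglyMeasurable.sub
      · exact (hadapted (n + i + 1)).sub ((hadapted (n + i)).mono (F.mono (Nat.le_succ _)))
      · exact (hAsm (n + i)).mono (F.mono (Nat.le_succ _))
    exact hsm.mono (F.mono hij)
  -- key martingale estimate
  have key : ∀ j, ∀ᵐ ω ∂P, (P[fun ω => (M j ω) ^ 2 | F n]) ω ≤ (j : ℝ) * (h * K ^ 2) := by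
    intro j
    induction j with
    | zero =>
      have hz : (fun ω => (M 0 ω) ^ 2) = fun _ : Ω => (0 : ℝ) := by
        funext ω; simp [hMdef]
      rw [hz]
      have : P[fun _ : Ω => (0 : ℝ) | F n] = 0 := condExp_zero
      rw [this]
      filter_upwards with ω
      simp
    | succ j ih =>
      have hsplit : (fun ω => (M (j + 1) ω) ^ 2) =
          fun ω => (M j ω) ^ 2 + (2 * (M j ω * D (n + j) ω) + (D (n + j) ω) ^ 2) := by
        funext ω
        simp only [hMdef, Finset.sum_range_succ]
        ring
      have hintM2 : Integrable (fun ω => (M j ω) ^ 2) P := (hM2 j).integrable_sq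
      have hintMD : Integrable (fun ω => M j ω * D (n + j) ω) P :=
        l2_mul_int (hM2 j) (hD2 (n + j))
      have hintMD2 : Integrable (fun ω => 2 * (M j ω * D (n + j) ω)) P := by
        simpa using hintMD.const_mul 2
      have hintD2 : Integrable (fun ω => (D (n + j) ω) ^ 2) P := (hD2 (n + j)).integrable_sq
      have e1 : P[fun ω => (M (j + 1) ω) ^ 2 | F n] =ᵐ[P]
          P[fun ω => (M j ω) ^ 2 | F n] +
            P[fun ω => 2 * (M j ω * D (n + j) ω) + (D (n + j) ω) ^ 2 | F n] := by
        rw [hsplit]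
        exact condExp_add hintM2 (hintMD2.add hintD2) (F n)
      have e2 : P[fun ω => 2 * (M j ω * D (n + j) ω) + (D (n + j) ω) ^ 2 | F n] =ᵐ[P]
          P[fun ω => 2 * (M j ω * D (n + j) ω) | F n] + P[fun ω => (D (n + j) ω) ^ 2 | F n] :=
        condExp_add hintMD2 hintD2 (F n)
      -- cross term vanishes
      have hcross0 : P[fun ω => M j ω * D (n + j) ω | F (n + j)] =ᵐ[P] 0 := by
        have := condExp_mul_of_stronglyMeasurable_left (hMsm j) hintMD (hDint (n + j))
        refine this.trans ?_
        filter_upwards [hDmean (n + j)] with ω hω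
        simp [hω]
      have hcross : P[fun ω => 2 * (M j ω * D (n + j) ω) | F n] =ᵐ[P] 0 := by
        have htow : P[fun ω => 2 * (M j ω * D (n + j) ω) | F n] =ᵐ[P]
            P[P[fun ω => 2 * (M j ω * D (n + j) ω) | F (n + j)] | F n] :=
          (condExp_condExp_of_le (F.mono (Nat.le_add_right n j)) (hFle (n + j))).symm
        refine htow.trans ?_
        have h2c : P[fun ω => 2 * (M j ω * D (n + j) ω) | F (n + j)] =ᵐ[P] 0 := by
          have hs : P[fun ω => 2 * (M j ω * D (n + j) ω) | F (n + j)] =ᵐ[P]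
              (2 : ℝ) • P[fun ω => M j ω * D (n + j) ω | F (n + j)] := by
            have := condExp_smul (m := F (n + j)) (μ := P) (2 : ℝ)
              (fun ω => M j ω * D (n + j) ω)
            exact this
          refine hs.trans ?_
          filter_upwards [hcross0] with ω hω
          simp [hω]
        refine (condExp_congr_ae h2c).trans ?_
        rw [condExp_zero]
      -- second moment term
      have hDcond : ∀ᵐ ω ∂P, (P[fun ω => (D (n + j) ω) ^ 2 | F n]) ω ≤ h * K ^ 2 := by
        have htow : P[fun ω => (D (n + j) ω) ^ 2 | F n] =ᵐ[P]
            P[P[fun ω => (D (n + j) ω) ^ 2 | F (n + j)] | F n] :=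
          (condExp_condExp_of_le (F.mono (Nat.le_add_right n j)) (hFle (n + j))).symm
        have hmono : P[P[fun ω => (D (n + j) ω) ^ 2 | F (n + j)] | F n] ≤ᵐ[P]
            P[fun _ : Ω => h * K ^ 2 | F n] :=
          condExp_mono integrable_condExp (integrable_const _) (hDsq (n + j))
        filter_upwards [htow, hmono] with ω h1 h2
        rw [h1]
        calc (P[P[fun ω => (D (n + j) ω) ^ 2 | F (n + j)] | F n]) ω
            ≤ (P[fun _ : Ω => h * K ^ 2 | F n]) ω := h2
          _ = h * K ^ 2 := by rw [condExp_const (hFle n)]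
      filter_upwards [e1, e2, hcross, hDcond, ih] with ω h1 h2 h3 h4 h5
      rw [h1, Pi.add_apply, h2, Pi.add_apply, h3]
      push_cast
      simp only [Pi.zero_apply]
      nlinarith [h4, h5]
  -- drift bound
  have hBbd : ∀ᵐ ω ∂P, |B m ω| ≤ (m : ℝ) * (h * K) := by
    have hall : ∀ᵐ ω ∂P, ∀ k, |A k ω| ≤ h * K := ae_all_iff.mpr hAbd
    filter_upwards [hall] with ω hω
    calc |B m ω| ≤ ∑ i ∈ Finset.range m, |A (n + i) ω| := by
          rw [hBdef]; exact Finset.abs_sum_le_sum_abs _ _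
      _ ≤ ∑ i ∈ Finset.range m, (h * K) := Finset.sum_le_sum fun i _ => hω (n + i)
      _ = (m : ℝ) * (h * K) := by simp [Finset.sum_const, mul_comm]
  -- telescoping decomposition
  have hdecomp : ∀ ω, ξ (n + m) ω - ξ n ω = M m ω + B m ω := by
    intro ω
    have htel : ∑ i ∈ Finset.range m, (ξ (n + (i + 1)) ω - ξ (n + i) ω)
        = ξ (n + m) ω - ξ (n + 0) ω := Finset.sum_range_sub (fun i => ξ (n + i) ω) m
    have heq : M m ω + B m ω = ∑ i ∈ Finset.range m, (ξ (n + (i + 1)) ω - ξ (n + i) ω) := by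
      rw [hMdef, hBdef, ← Finset.sum_add_distrib]
      refine Finset.sum_congr rfl fun i _ => ?_
      rw [← Nat.add_assoc]
      simp [hDdef, hΔdef]
    rw [heq, htel, Nat.add_zero]
  -- combine
  have hfun : (fun ω => (ξ (n + m) ω - ξ n ω) ^ 2) = fun ω => (M m ω + B m ω) ^ 2 := by
    funext ω; rw [hdecomp ω]
  have hintS : Integrable (fun ω => (M m ω + B m ω) ^ 2) P :=
    ((hM2 m).add (hB2 m)).integrable_sq
  have hintM2 : Integrable (fun ω => (M m ω) ^ 2) P := (hM2 m).integrable_sq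
  have hintB2 : Integrable (fun ω => (B m ω) ^ 2) P := (hB2 m).integrable_sq
  have hint2M2 : Integrable (fun ω => 2 * (M m ω) ^ 2) P := by simpa using hintM2.const_mul 2
  have hint2B2 : Integrable (fun ω => 2 * (B m ω) ^ 2) P := by simpa using hintB2.const_mul 2
  have hmono : P[fun ω => (ξ (n + m) ω - ξ n ω) ^ 2 | F n] ≤ᵐ[P]
      P[fun ω => 2 * (M m ω) ^ 2 + 2 * (B m ω) ^ 2 | F n] := by
    rw [hfun]
    refine condExp_mono hintS (hint2M2.add hint2B2) ?_
    filter_upwards with ω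
    nlinarith [sq_nonneg (M m ω - B m ω)]
  have hadd : P[fun ω => 2 * (M m ω) ^ 2 + 2 * (B m ω) ^ 2 | F n] =ᵐ[P]
      P[fun ω => 2 * (M m ω) ^ 2 | F n] + P[fun ω => 2 * (B m ω) ^ 2 | F n] :=
    condExp_add hint2M2 hint2B2 (F n)
  have hsm1 : P[fun ω => 2 * (M m ω) ^ 2 | F n] =ᵐ[P]
      (2 : ℝ) • P[fun ω => (M m ω) ^ 2 | F n] := by
    have := condExp_smul (m := F n) (μ := P) (2 : ℝ) (fun ω => (M m ω) ^ 2)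
    exact this
  have hsm2 : P[fun ω => 2 * (B m ω) ^ 2 | F n] =ᵐ[P]
      (2 : ℝ) • P[fun ω => (B m ω) ^ 2 | F n] := by
    have := condExp_smul (m := F n) (μ := P) (2 : ℝ) (fun ω => (B m ω) ^ 2)
    exact this
  have hBcond : ∀ᵐ ω ∂P, (P[fun ω => (B m ω) ^ 2 | F n]) ω ≤ ((m : ℝ) * (h * K)) ^ 2 := by
    have hle : (fun ω => (B m ω) ^ 2) ≤ᵐ[P] fun _ => ((m : ℝ) * (h * K)) ^ 2 := by
      filter_upwards [hBbd] with ω hω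
      have := abs_nonneg (B m ω)
      nlinarith [sq_abs (B m ω)]
    have := condExp_mono (m := (F n : MeasurableSpace Ω)) hintB2 (integrable_const _) hle
    filter_upwards [this] with ω hω
    calc (P[fun ω => (B m ω) ^ 2 | F n]) ω
        ≤ (P[fun _ : Ω => ((m : ℝ) * (h * K)) ^ 2 | F n]) ω := hω
      _ = ((m : ℝ) * (h * K)) ^ 2 := by rw [condExp_const (hFle n)]
  filter_upwards [hmono, hadd, hsm1, hsm2, hBcond, key m] with ω h1 h2 h3 h4 h5 h6
  have step : (P[fun ω => (ξ (n + m) ω - ξ n ω) ^ 2 | F n]) ω ≤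
      2 * ((P[fun ω => (M m ω) ^ 2 | F n]) ω) + 2 * ((P[fun ω => (B m ω) ^ 2 | F n]) ω) := by
    calc (P[fun ω => (ξ (n + m) ω - ξ n ω) ^ 2 | F n]) ω
        ≤ (P[fun ω => 2 * (M m ω) ^ 2 + 2 * (B m ω) ^ 2 | F n]) ω := h1
      _ = _ := by rw [h2, Pi.add_apply, h3, h4]; simp [smul_eq_mul]
  have hm0 : (0 : ℝ) ≤ (m : ℝ) := Nat.cast_nonneg m
  nlinarith [step, h5, h6, sq_nonneg K, mul_pos hh hK]
end

section
/- Let Γ be a compact metric space, T > 0, and let μ_n (n ∈ ℕ) and μ be finite-horizon relaxed controls on Γ × [0,T], i.e. finite Borel measures with μ_n(Γ × [0,t]) = μ(Γ × [0,t]) = t for all t ∈ [0,T]. Suppose (μ_n) converges weakly to μ. Then for every continuous function f : Γ × [0,T] → ℝ, the partial integrals converge uniformly in time: sup_{t∈[0,T]} | ∫_{Γ×[0,t]} f dμ_n − ∫_{Γ×[0,t]} f dμ | → 0 as n → ∞. -/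
/-!
The partial integrals `t ↦ ∫_{Γ×[0,t]} f dν` of a bounded `f` against a relaxed control `ν`
are `‖f‖`-Lipschitz, since the strip `Γ × (a, b]` has `ν`-mass `b - a`. So the family indexed
by `n` is equicontinuous on the compact interval `[0, T]`, and uniform convergence reduces to
pointwise convergence. At a fixed time `t`, replacing the indicator of `[0, t]` by a continuous ramp
falling to `0` on `[t, t + δ]` changes every partial integral by at most `‖f‖ δ`, and weak
convergence applies to the ramped integrand.
-/

open MeasureTheory Filter Set Topology
open scoped NNReal

noncomputable def rampDown (t δ u : ℝ) : ℝ := max 0 (min 1 ((t + δ - u) / δ))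

theorem continuous_rampDown (t δ : ℝ) : Continuous (rampDown t δ) :=
  continuous_const.max <|
    continuous_const.min ((continuous_const.sub continuous_id).div_const δ)

theorem norm_rampDown_le_one (t δ u : ℝ) : ‖rampDown t δ u‖ ≤ 1 := by
  rw [rampDown, Real.norm_of_nonneg (le_max_left _ _)]
  exact max_le zero_le_one (min_le_left _ _)

theorem rampDown_of_le {t δ u : ℝ} (hδ : 0 < δ) (h : u ≤ t) : rampDown t δ u = 1 := by
  have : 1 ≤ (t + δ - u) / δ := by rw [le_div_iff₀ hδ]; linarith
  simp [rampDown, min_eq_left this]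

theorem rampDown_of_add_le {t δ u : ℝ} (hδ : 0 < δ) (h : t + δ ≤ u) :
    rampDown t δ u = 0 := by
  have : (t + δ - u) / δ ≤ 0 := div_nonpos_of_nonpos_of_nonneg (by linarith) hδ.le
  simp [rampDown, min_le_of_right_le this]

theorem tendsto_of_forall_approx {ι α : Type*} [PseudoMetricSpace α] {l : Filter ι}
    {u : ι → α} {a : α}
    (h : ∀ ε > 0, ∃ v : ι → α, ∃ b, Tendsto v l (𝓝 b) ∧ (∀ i, dist (u i) (v i) ≤ ε) ∧
      dist a b ≤ ε) :
    Tendsto u l (𝓝 a) := by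
  refine Metric.tendsto_nhds.2 fun ε hε => ?_
  obtain ⟨v, b, hv, huv, hab⟩ := h (ε / 3) (by positivity)
  filter_upwards [Metric.tendsto_nhds.1 hv (ε / 3) (by positivity)] with i hi
  calc dist (u i) a ≤ dist (u i) (v i) + dist (v i) b + dist b a := dist_triangle4 _ _ _ _
    _ < ε := by linarith [huv i, dist_comm a b]

theorem tendsto_iSup_abs_sub_of_tendstoUniformly {ι α : Type*} {l : Filter ι}
    {F : ι → α → ℝ} {g : α → ℝ} (h : TendstoUniformly F g l) :
    Tendsto (fun i => ⨆ a, |F i a - g a|) l (𝓝 0) := by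
  refine Metric.tendsto_nhds.2 fun ε hε => ?_
  filter_upwards [Metric.tendstoUniformly_iff.1 h (ε / 2) (by positivity)] with i hi
  have hsup : (⨆ a, |F i a - g a|) ≤ ε / 2 :=
    Real.iSup_le (fun a => by rw [abs_sub_comm, ← Real.dist_eq]; exact (hi a).le)
      (by positivity)
  rw [Real.dist_0_eq_abs, abs_of_nonneg (Real.iSup_nonneg fun a => abs_nonneg _)]
  linarith

section RelaxedControl

variable {X : Type*} {T : ℝ}

def untilTime (r : ℝ) : Set (X × Icc (0 : ℝ) T) := univ ×ˢ {s : Icc (0 : ℝ) T | (s : ℝ) ≤ r}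

theorem untilTime_mono : Monotone (untilTime (X := X) (T := T)) :=
  fun _ _ hab _ hx => ⟨trivial, hx.2.trans hab⟩

theorem untilTime_min_right (r : ℝ) :
    untilTime (X := X) (T := T) (min r T) = untilTime r := by
  ext x
  simp [untilTime, x.2.2.2]

theorem untilTime_self : untilTime (X := X) (T := T) T = univ :=
  eq_univ_of_forall fun x => ⟨trivial, x.2.2.2⟩

theorem norm_indicator_sub_mul_rampDown_le {f : X × Icc (0 : ℝ) T → ℝ} {C : ℝ≥0}
    (hC : ∀ x, ‖f x‖ ≤ C) {t δ : ℝ} (hδ : 0 < δ)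
    (x : X × Icc (0 : ℝ) T) :
    ‖(untilTime t).indicator f x - f x * rampDown t δ x.2‖ ≤
      (untilTime (t + δ) \ untilTime t).indicator (fun _ => (C : ℝ)) x := by
  have hC0 : ∀ y : X × Icc (0 : ℝ) T,
      0 ≤ (untilTime (t + δ) \ untilTime t).indicator (fun _ => (C : ℝ)) y :=
    indicator_nonneg fun _ _ => C.2
  by_cases hxt : (x.2 : ℝ) ≤ t
  · rw [indicator_of_mem (show x ∈ untilTime t from ⟨trivial, hxt⟩), rampDown_of_le hδ hxt,
      mul_one, sub_self, norm_zero]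
    exact hC0 x
  have hx : x ∉ untilTime t := fun h => hxt h.2
  rw [indicator_of_notMem hx, zero_sub, norm_neg, norm_mul]
  by_cases hxtδ : (x.2 : ℝ) ≤ t + δ
  · have hstrip : x ∈ untilTime (t + δ) \ untilTime t := ⟨⟨trivial, hxtδ⟩, hx⟩
    rw [indicator_of_mem hstrip, ← mul_one (C : ℝ)]
    exact mul_le_mul (hC x) (norm_rampDown_le_one _ _ _) (norm_nonneg _) C.2
  · rw [rampDown_of_add_le hδ (le_of_not_ge hxtδ), norm_zero, mul_zero]
    exact hC0 x

variable [MeasurableSpace X]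

theorem measurableSet_untilTime (r : ℝ) : MeasurableSet (untilTime (X := X) (T := T) r) :=
  MeasurableSet.univ.prod (measurableSet_le measurable_subtype_coe measurable_const)

def IsRelaxedControl (ν : Measure (X × Icc (0 : ℝ) T)) : Prop :=
  ∀ t ∈ Icc (0 : ℝ) T, ν (untilTime t) = ENNReal.ofReal t

namespace IsRelaxedControl

variable {ν : Measure (X × Icc (0 : ℝ) T)}

theorem isFiniteMeasure (hν : IsRelaxedControl ν) : IsFiniteMeasure ν := by
  rcases le_or_gt 0 T with hT | hT
  · refine ⟨?_⟩
    rw [← untilTime_self, hν T ⟨hT, le_rfl⟩]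
    exact ENNReal.ofReal_lt_top
  · have : IsEmpty (Icc (0 : ℝ) T) := isEmpty_coe_sort.2 (Icc_eq_empty (not_le.2 hT))
    infer_instance

theorem measureReal_untilTime_diff_le (hν : IsRelaxedControl ν) {a b : ℝ}
    (ha : a ∈ Icc (0 : ℝ) T) (hab : a ≤ b) :
    ν.real (untilTime b \ untilTime a) ≤ b - a := by
  have := hν.isFiniteMeasure
  have hbT : min b T ∈ Icc (0 : ℝ) T :=
    ⟨le_min (ha.1.trans hab) (ha.1.trans ha.2), min_le_right _ _⟩
  refine ENNReal.toReal_le_of_le_ofReal (sub_nonneg.2 hab) ?_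
  rw [← untilTime_min_right b, measure_sdiff (untilTime_mono (le_min hab ha.2))
    (measurableSet_untilTime a).nullMeasurableSet (measure_ne_top _ _), hν _ hbT, hν a ha,
    ← ENNReal.ofReal_sub _ ha.1]
  exact ENNReal.ofReal_le_ofReal (by linarith [min_le_left b T])

variable {f : X × Icc (0 : ℝ) T → ℝ} {C : ℝ≥0}

theorem dist_setIntegral_untilTime_le (hν : IsRelaxedControl ν)
    (hf : AEStronglyMeasurable f ν) (hC : ∀ x, ‖f x‖ ≤ C) {a b : ℝ}
    (ha : a ∈ Icc (0 : ℝ) T) (hab : a ≤ b) :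
    dist (∫ x in untilTime b, f x ∂ν) (∫ x in untilTime a, f x ∂ν) ≤ C * (b - a) := by
  have := hν.isFiniteMeasure
  have hfi : Integrable f ν := .of_bound hf C (ae_of_all _ hC)
  rw [dist_eq_norm, ← setIntegral_sdiff (measurableSet_untilTime a) hfi.integrableOn
    (untilTime_mono hab)]
  calc _ ≤ C * ν.real (untilTime b \ untilTime a) :=
        norm_setIntegral_le_of_norm_le_const (measure_lt_top _ _) fun x _ => hC x
    _ ≤ C * (b - a) := by gcongr; exact hν.measureReal_untilTime_diff_le ha hab

theorem lipschitzWith_setIntegral_untilTime (hν : IsRelaxedControl ν)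
    (hf : AEStronglyMeasurable f ν) (hC : ∀ x, ‖f x‖ ≤ C) :
    LipschitzWith C fun t : Icc (0 : ℝ) T => ∫ x in untilTime t, f x ∂ν := by
  refine LipschitzWith.of_dist_le_mul fun s t => ?_
  rcases le_total (s : ℝ) t with h | h
  · rw [dist_comm, dist_comm s, Subtype.dist_eq, Real.dist_eq (t : ℝ),
      abs_of_nonneg (sub_nonneg.2 h)]
    exact hν.dist_setIntegral_untilTime_le hf hC s.2 h
  · rw [Subtype.dist_eq, Real.dist_eq (s : ℝ), abs_of_nonneg (sub_nonneg.2 h)]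
    exact hν.dist_setIntegral_untilTime_le hf hC t.2 h

theorem dist_setIntegral_untilTime_integral_mul_rampDown_le (hν : IsRelaxedControl ν)
    (hf : AEStronglyMeasurable f ν) (hC : ∀ x, ‖f x‖ ≤ C) {t δ : ℝ}
    (ht : t ∈ Icc (0 : ℝ) T) (hδ : 0 < δ) :
    dist (∫ x in untilTime t, f x ∂ν) (∫ x, f x * rampDown t δ x.2 ∂ν) ≤ C * δ := by
  have := hν.isFiniteMeasure
  have hfi : Integrable f ν := .of_bound hf C (ae_of_all _ hC)
  have hramp : Integrable (fun x => f x * rampDown t δ x.2) ν :=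
    hfi.mul_bdd ((continuous_rampDown t δ).measurable.comp
      (measurable_subtype_coe.comp measurable_snd)).aestronglyMeasurable
      (ae_of_all _ fun x => norm_rampDown_le_one t δ x.2)
  have hstrip : MeasurableSet (untilTime (X := X) (T := T) (t + δ) \ untilTime t) :=
    (measurableSet_untilTime _).diff (measurableSet_untilTime _)
  rw [dist_eq_norm, ← integral_indicator (measurableSet_untilTime t),
    ← integral_sub (hfi.indicator (measurableSet_untilTime t)) hramp]
  calc _ ≤ ∫ x, (untilTime (t + δ) \ untilTime t).indicator (fun _ => (C : ℝ)) x ∂ν :=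
        norm_integral_le_of_norm_le ((integrable_const _).indicator hstrip)
          (ae_of_all _ (norm_indicator_sub_mul_rampDown_le hC hδ))
    _ = C * ν.real (untilTime (t + δ) \ untilTime t) := by
        rw [integral_indicator_const _ hstrip, smul_eq_mul, mul_comm]
    _ ≤ C * δ := by
        gcongr
        simpa using hν.measureReal_untilTime_diff_le ht (le_add_of_nonneg_right hδ.le)

theorem tendsto_setIntegral_untilTime_of_tendsto_integral [TopologicalSpace X] [CompactSpace X]
    [OpensMeasurableSpace X] {ι : Type*} {l : Filter ι} {μs : ι → Measure (X × Icc (0 : ℝ) T)}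
    {μ : Measure (X × Icc (0 : ℝ) T)} (hμs : ∀ i, IsRelaxedControl (μs i))
    (hμ : IsRelaxedControl μ)
    (hconv : ∀ g : BoundedContinuousFunction (X × Icc (0 : ℝ) T) ℝ,
      Tendsto (fun i => ∫ x, g x ∂(μs i)) l (𝓝 (∫ x, g x ∂μ)))
    {f : X × Icc (0 : ℝ) T → ℝ} (hf : Continuous f) {t : ℝ} (ht : t ∈ Icc (0 : ℝ) T) :
    Tendsto (fun i => ∫ x in untilTime t, f x ∂(μs i)) l (𝓝 (∫ x in untilTime t, f x ∂μ)) := by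
  let F := BoundedContinuousFunction.mkOfCompact ⟨f, hf⟩
  set C := ‖F‖₊
  refine tendsto_of_forall_approx fun ε hε => ?_
  set δ := ε / (C + 1)
  have hδ : 0 < δ := by positivity
  have hCδ : C * δ ≤ ε := by
    rw [← mul_div_assoc, div_le_iff₀ (by positivity)]
    nlinarith
  let G := BoundedContinuousFunction.mkOfCompact
    ⟨fun x => f x * rampDown t δ x.2, hf.mul ((continuous_rampDown t δ).comp
      (continuous_subtype_val.comp continuous_snd))⟩
  refine ⟨fun i => ∫ x, G x ∂(μs i), ∫ x, G x ∂μ, hconv G, fun i => ?_, ?_⟩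
  · exact ((hμs i).dist_setIntegral_untilTime_integral_mul_rampDown_le
      (C := C) hf.aestronglyMeasurable F.norm_coe_le_norm ht hδ).trans hCδ
  · exact (hμ.dist_setIntegral_untilTime_integral_mul_rampDown_le
      (C := C) hf.aestronglyMeasurable F.norm_coe_le_norm ht hδ).trans hCδ

end IsRelaxedControl

end RelaxedControl

theorem stmt_10_general {Γ : Type*} [MetricSpace Γ] [CompactSpace Γ]
    [MeasurableSpace Γ] [BorelSpace Γ]
    (T : ℝ)
    (μn : ℕ → Measure (Γ × ↥(Set.Icc (0 : ℝ) T)))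
    (μ : Measure (Γ × ↥(Set.Icc (0 : ℝ) T)))
    (hrelaxedn : ∀ n, ∀ t ∈ Set.Icc (0 : ℝ) T,
      μn n (Set.univ ×ˢ {s : ↥(Set.Icc (0 : ℝ) T) | (s : ℝ) ≤ t}) = ENNReal.ofReal t)
    (hrelaxed : ∀ t ∈ Set.Icc (0 : ℝ) T,
      μ (Set.univ ×ˢ {s : ↥(Set.Icc (0 : ℝ) T) | (s : ℝ) ≤ t}) = ENNReal.ofReal t)
    (hconv : ∀ g : BoundedContinuousFunction (Γ × ↥(Set.Icc (0 : ℝ) T)) ℝ,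
      Tendsto (fun n => ∫ x, g x ∂(μn n)) atTop (nhds (∫ x, g x ∂μ)))
    (f : Γ × ↥(Set.Icc (0 : ℝ) T) → ℝ) (hf : Continuous f) :
    Tendsto (fun n => ⨆ t : Set.Icc (0 : ℝ) T,
        |(∫ x in Set.univ ×ˢ {s : ↥(Set.Icc (0 : ℝ) T) | (s : ℝ) ≤ (t : ℝ)}, f x ∂(μn n)) -
         ∫ x in Set.univ ×ˢ {s : ↥(Set.Icc (0 : ℝ) T) | (s : ℝ) ≤ (t : ℝ)}, f x ∂μ|)
      atTop (nhds 0) := by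
  have hμn : ∀ n, IsRelaxedControl (μn n) := hrelaxedn
  have hμ : IsRelaxedControl μ := hrelaxed
  let F := BoundedContinuousFunction.mkOfCompact ⟨f, hf⟩
  have hequi : Equicontinuous fun n (t : Icc (0 : ℝ) T) => ∫ x in untilTime t, f x ∂(μn n) :=
    (LipschitzWith.uniformEquicontinuous _ ‖F‖₊ fun n =>
      (hμn n).lipschitzWith_setIntegral_untilTime hf.aestronglyMeasurable
        F.norm_coe_le_norm).equicontinuous
  have hpointwise : Tendsto (fun n (t : Icc (0 : ℝ) T) => ∫ x in untilTime t, f x ∂(μn n))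
      atTop (𝓝 fun t => ∫ x in untilTime t, f x ∂μ) :=
    tendsto_pi_nhds.2 fun t =>
      IsRelaxedControl.tendsto_setIntegral_untilTime_of_tendsto_integral hμn hμ hconv hf t.2
  exact tendsto_iSup_abs_sub_of_tendstoUniformly <| UniformFun.tendsto_iff_tendstoUniformly.1 <|
    (hequi.tendsto_uniformFun_iff_pi _ _).2 hpointwise

/-- if finite-horizon relaxed controls `μ_n` on `Γ × [0,T]` converge
weakly to a finite-horizon relaxed control `μ`, then for every continuous
`f : Γ × [0,T] → ℝ` the partial integrals `∫_{Γ×[0,t]} f dμ_n` converge to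
`∫_{Γ×[0,t]} f dμ` uniformly in `t ∈ [0,T]`. -/
theorem stmt_10 {Γ : Type*} [MetricSpace Γ] [CompactSpace Γ]
    [MeasurableSpace Γ] [BorelSpace Γ]
    (T : ℝ) (hT : 0 < T)
    (μn : ℕ → Measure (Γ × ↥(Set.Icc (0 : ℝ) T)))
    (μ : Measure (Γ × ↥(Set.Icc (0 : ℝ) T)))
    (hfin : ∀ n, IsFiniteMeasure (μn n)) (hfinμ : IsFiniteMeasure μ)
    (hrelaxedn : ∀ n, ∀ t ∈ Set.Icc (0 : ℝ) T,
      μn n (Set.univ ×ˢ {s : ↥(Set.Icc (0 : ℝ) T) | (s : ℝ) ≤ t}) = ENNReal.ofReal t)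
    (hrelaxed : ∀ t ∈ Set.Icc (0 : ℝ) T,
      μ (Set.univ ×ˢ {s : ↥(Set.Icc (0 : ℝ) T) | (s : ℝ) ≤ t}) = ENNReal.ofReal t)
    (hconv : ∀ g : BoundedContinuousFunction (Γ × ↥(Set.Icc (0 : ℝ) T)) ℝ,
      Tendsto (fun n => ∫ x, g x ∂(μn n)) atTop (nhds (∫ x, g x ∂μ)))
    (f : Γ × ↥(Set.Icc (0 : ℝ) T) → ℝ) (hf : Continuous f) :
    Tendsto (fun n => ⨆ t : Set.Icc (0 : ℝ) T,
        |(∫ x in Set.univ ×ˢ {s : ↥(Set.Icc (0 : ℝ) T) | (s : ℝ) ≤ (t : ℝ)}, f x ∂(μn n)) -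
         ∫ x in Set.univ ×ˢ {s : ↥(Set.Icc (0 : ℝ) T) | (s : ℝ) ≤ (t : ℝ)}, f x ∂μ|)
      atTop (nhds 0) :=
  stmt_10_general T μn μ hrelaxedn hrelaxed hconv f hf
end

section
/- Let r > 0, σ₀ > 0, K > 0 and let A ⊆ (−r, 0]. Consider functions φ : [−r, 0] → ℝ that possess a left-hand limit φ(t−) := lim_{s→t, s<t} φ(s) at every point t ∈ (−r, 0], and define σ(φ) := σ₀ + min(K, sup_{t∈A} |φ(t) − φ(t−)|). Then for any two such functions φ, ψ: |σ(φ) − σ(ψ)| ≤ 2·sup_{s∈[−r,0]} |φ(s) − ψ(s)|; i.e. the jump-size functional σ satisfies the uniform Lipschitz condition with constant 2 in the supremum norm. -/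
open Filter Set Topology
open scoped ENNReal

/-!
The jump size `|φ(t) − φ(t−)|` moves by at most `2 sup |φ − ψ|` when `φ` is replaced by `ψ`:
once through `|φ(t) − ψ(t)|` and once through `|φ(t−) − ψ(t−)|`, the latter being a limit of
values `|φ(s) − ψ(s)|` with `s < t` still in the interval. Taking the supremum over `A` and then
truncating at `K` are both `1`-Lipschitz, and the constant `σ₀` cancels.
-/

section LeftLimits

variable {α : Type*} [PseudoEMetricSpace α] {a b t : ℝ} {φ ψ φL ψL : ℝ → α}

theorem edist_leftLim_le_biSup_Icc (ht : t ∈ Ioc a b)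
    (hφ : Tendsto φ (𝓝[<] t) (𝓝 (φL t))) (hψ : Tendsto ψ (𝓝[<] t) (𝓝 (ψL t))) :
    edist (φL t) (ψL t) ≤ ⨆ s ∈ Icc a b, edist (φ s) (ψ s) := by
  refine le_of_tendsto (hφ.edist hψ) ?_
  have h_left : Ioi a ∈ 𝓝[<] t := nhdsWithin_le_nhds (Ioi_mem_nhds ht.1)
  filter_upwards [h_left, self_mem_nhdsWithin] with s has hst
  exact le_biSup (fun s => edist (φ s) (ψ s)) ⟨has.le, hst.le.trans ht.2⟩

theorem edist_jump_le_add (ht : t ∈ Ioc a b)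
    (hφ : Tendsto φ (𝓝[<] t) (𝓝 (φL t))) (hψ : Tendsto ψ (𝓝[<] t) (𝓝 (ψL t))) :
    edist (φ t) (φL t) ≤ edist (ψ t) (ψL t) + 2 * ⨆ s ∈ Icc a b, edist (φ s) (ψ s) := by
  set M := ⨆ s ∈ Icc a b, edist (φ s) (ψ s)
  have h_pt : edist (φ t) (ψ t) ≤ M :=
    le_biSup (fun s => edist (φ s) (ψ s)) (Ioc_subset_Icc_self ht)
  have h_lim : edist (ψL t) (φL t) ≤ M := by
    rw [edist_comm]
    exact edist_leftLim_le_biSup_Icc ht hφ hψ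
  calc edist (φ t) (φL t) ≤ edist (φ t) (ψ t) + edist (ψ t) (ψL t) + edist (ψL t) (φL t) :=
        edist_triangle4 _ _ _ _
    _ ≤ M + edist (ψ t) (ψL t) + M := by gcongr
    _ = edist (ψ t) (ψL t) + 2 * M := by ring

theorem biSup_edist_jump_le_add {A : Set ℝ} (hA : A ⊆ Ioc a b)
    (hφ : ∀ t ∈ Ioc a b, Tendsto φ (𝓝[<] t) (𝓝 (φL t)))
    (hψ : ∀ t ∈ Ioc a b, Tendsto ψ (𝓝[<] t) (𝓝 (ψL t))) :
    ⨆ t ∈ A, edist (φ t) (φL t) ≤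
      (⨆ t ∈ A, edist (ψ t) (ψL t)) + 2 * ⨆ s ∈ Icc a b, edist (φ s) (ψ s) :=
  iSup₂_le fun t ht => (edist_jump_le_add (hA ht) (hφ t (hA ht)) (hψ t (hA ht))).trans <|
    add_le_add_left (le_biSup (fun t => edist (ψ t) (ψL t)) ht) _

end LeftLimits

theorem min_le_min_add_of_le_add {α : Type*} [LinearOrder α] [AddCommMonoid α]
    [CanonicallyOrderedAdd α] {k x y c : α} (h : x ≤ y + c) : min k x ≤ min k y + c :=
  calc min k x ≤ min (k + c) (y + c) := min_le_min le_self_add h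
    _ = min k y + c := min_add_add_right _ _ _

theorem ENNReal.edist_toReal_le {x y c : ℝ≥0∞} (hx : x ≠ ∞) (hy : y ≠ ∞)
    (hxy : x ≤ y + c) (hyx : y ≤ x + c) : edist x.toReal y.toReal ≤ c := by
  rcases eq_or_ne c ∞ with rfl | hc
  · exact le_top
  have hxy' := ENNReal.toReal_mono (by finiteness) hxy
  have hyx' := ENNReal.toReal_mono (by finiteness) hyx
  rw [ENNReal.toReal_add hy hc] at hxy'
  rw [ENNReal.toReal_add hx hc] at hyx'
  rw [edist_dist, Real.dist_eq, ENNReal.ofReal_le_iff_le_toReal hc, abs_sub_le_iff]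
  constructor <;> linarith

theorem stmt_13_general (r σ₀ K : ℝ)
    (A : Set ℝ) (hA : A ⊆ Set.Ioc (-r) (0 : ℝ))
    (φ ψ φL ψL : ℝ → ℝ)
    (hφ : ∀ t ∈ Set.Ioc (-r) (0 : ℝ),
      Tendsto φ (nhdsWithin t (Set.Iio t)) (nhds (φL t)))
    (hψ : ∀ t ∈ Set.Ioc (-r) (0 : ℝ),
      Tendsto ψ (nhdsWithin t (Set.Iio t)) (nhds (ψL t))) :
    ENNReal.ofReal
        |(σ₀ + (min (ENNReal.ofReal K) (⨆ t ∈ A, ENNReal.ofReal |φ t - φL t|)).toReal) -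
         (σ₀ + (min (ENNReal.ofReal K) (⨆ t ∈ A, ENNReal.ofReal |ψ t - ψL t|)).toReal)| ≤
      2 * ⨆ s ∈ Set.Icc (-r) (0 : ℝ), ENNReal.ofReal |φ s - ψ s| := by
  simp_rw [← Real.dist_eq, ← edist_dist, edist_add_left]
  have hφψ := biSup_edist_jump_le_add hA hφ hψ
  have hψφ := biSup_edist_jump_le_add hA hψ hφ
  simp_rw [edist_comm (ψ _) (φ _)] at hψφ
  exact ENNReal.edist_toReal_le (min_lt_of_left_lt ENNReal.ofReal_lt_top).ne
    (min_lt_of_left_lt ENNReal.ofReal_lt_top).ne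
    (min_le_min_add_of_le_add hφψ) (min_le_min_add_of_le_add hψφ)

/-- the jump-size diffusion functional
`σ(φ) = σ₀ + min(K, sup_{t∈A} |φ(t) − φ(t−)|)` satisfies the uniform Lipschitz
condition with constant `2` in the supremum norm: `|σ(φ) − σ(ψ)| ≤ 2·sup |φ − ψ|`.
Suprema are taken in `ℝ≥0∞` so that possibly unbounded jumps/differences are handled
faithfully; `φL t` and `ψL t` denote the left-hand limits of `φ` and `ψ` at `t`. -/
theorem stmt_13 (r σ₀ K : ℝ) (hr : 0 < r) (hσ₀ : 0 < σ₀) (hK : 0 < K)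
    (A : Set ℝ) (hA : A ⊆ Set.Ioc (-r) (0 : ℝ))
    (φ ψ φL ψL : ℝ → ℝ)
    (hφ : ∀ t ∈ Set.Ioc (-r) (0 : ℝ),
      Tendsto φ (nhdsWithin t (Set.Iio t)) (nhds (φL t)))
    (hψ : ∀ t ∈ Set.Ioc (-r) (0 : ℝ),
      Tendsto ψ (nhdsWithin t (Set.Iio t)) (nhds (ψL t))) :
    ENNReal.ofReal
        |(σ₀ + (min (ENNReal.ofReal K) (⨆ t ∈ A, ENNReal.ofReal |φ t - φL t|)).toReal) -
         (σ₀ + (min (ENNReal.ofReal K) (⨆ t ∈ A, ENNReal.ofReal |ψ t - ψL t|)).toReal)| ≤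
      2 * ⨆ s ∈ Set.Icc (-r) (0 : ℝ), ENNReal.ofReal |φ s - ψ s| :=
  stmt_13_general r σ₀ K A hA φ ψ φL ψL hφ hψ
end
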